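/- At any parameter point where the maintained assumptions hold, each firm's own-government product-R&D subsidy strictly increases its output and R&D: dq1/dσ1 = (1/Δ)·(1−t)·q1·T2/(2(1−b1)(1−σ1)²θ1) > 0, dr1/dσ1 = ((1−t)·q1/((1−σ1)²θ1))·[1 + (1/Δ)·(1−t)·T2/(2(1−b1)(1−σ1)θ1)] > 0, dq2/dσ2 = (1/Δ)·q2·T1/(2(1−b2)(1−σ2)²θ2) > 0, and dr2/dσ2 = (q2/((1−σ2)²θ2))·(T1 − M)/Δ > 0, where T1 − M > 0 follows from the maintained assumptions. -/

import Mathlib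

/-- Effective slope term of the foreign firm's best response under product R&D. -/
noncomputable def Tone (b1 t σ1 θ1 : ℝ) : ℝ :=
  1 - (1 - t) / (2 * (1 - b1) * (1 - σ1) * θ1)

/-- Effective slope term of the home firm's best response under product R&D. -/
noncomputable def Ttwo (b2 σ2 θ2 : ℝ) : ℝ :=
  1 - 1 / (2 * (1 - b2) * (1 - σ2) * θ2)

/-- Network-interaction term `M = m² / (4(1−b1)(1−b2))`. -/
noncomputable def Mnet (m b1 b2 : ℝ) : ℝ := m ^ 2 / (4 * (1 - b1) * (1 - b2))

/-- Determinant `Δ = T1·T2 − M` of the product-R&D equilibrium system. -/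
noncomputable def Dr (m b1 b2 t σ1 σ2 θ1 θ2 : ℝ) : ℝ :=
  Tone b1 t σ1 θ1 * Ttwo b2 σ2 θ2 - Mnet m b1 b2

/-- Equilibrium foreign output `q1` under product R&D. -/
noncomputable def q1p (a c1 c2 m b1 b2 t σ1 σ2 θ1 θ2 : ℝ) : ℝ :=
  ((a - c1 / (1 - t)) * Ttwo b2 σ2 θ2 / (2 * (1 - b1))
      - m * (a - c2) / (2 * (1 - b2))) / Dr m b1 b2 t σ1 σ2 θ1 θ2

/-- Equilibrium home output `q2` under product R&D. -/
noncomputable def q2p (a c1 c2 m b1 b2 t σ1 σ2 θ1 θ2 : ℝ) : ℝ :=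
  ((a - c2) * Tone b1 t σ1 θ1 / (2 * (1 - b2))
      - m * (a - c1 / (1 - t)) / (2 * (1 - b1))) / Dr m b1 b2 t σ1 σ2 θ1 θ2

/-- Equilibrium foreign product R&D `r1 = (1−t)q1 / ((1−σ1)θ1)`. -/
noncomputable def r1p (a c1 c2 m b1 b2 t σ1 σ2 θ1 θ2 : ℝ) : ℝ :=
  (1 - t) * q1p a c1 c2 m b1 b2 t σ1 σ2 θ1 θ2 / ((1 - σ1) * θ1)

/-- Equilibrium home product R&D `r2 = q2 / ((1−σ2)θ2)`. -/
noncomputable def r2p (a c1 c2 m b1 b2 t σ1 σ2 θ1 θ2 : ℝ) : ℝ :=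
  q2p a c1 c2 m b1 b2 t σ1 σ2 θ1 θ2 / ((1 - σ2) * θ2)

set_option maxHeartbeats 1000000 in
/-- Each firm's own-government product-R&D subsidy strictly increases
its output and R&D, with `T1 − M > 0` following from the maintained assumptions. -/
theorem own_subsidy_effects_productRD
    (a c1 c2 m b1 b2 t σ1 σ2 θ1 θ2 : ℝ)
    (ha : 0 < a) (hc1 : 0 < c1) (hc2 : 0 < c2)
    (hb1 : b1 ∈ Set.Ioo (0 : ℝ) 1) (hb2 : b2 ∈ Set.Ioo (0 : ℝ) 1)
    (ht : t ∈ Set.Ioo (0 : ℝ) 1)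
    (hσ1 : σ1 ∈ Set.Ioo (0 : ℝ) 1) (hσ2 : σ2 ∈ Set.Ioo (0 : ℝ) 1)
    (hθ1 : 0 < θ1) (hθ2 : 0 < θ2)
    (hT1 : Tone b1 t σ1 θ1 > 0) (hT2 : Ttwo b2 σ2 θ2 > 0)
    (hΔ : Dr m b1 b2 t σ1 σ2 θ1 θ2 > 0)
    (hq1 : q1p a c1 c2 m b1 b2 t σ1 σ2 θ1 θ2 > 0)
    (hq2 : q2p a c1 c2 m b1 b2 t σ1 σ2 θ1 θ2 > 0)
    :
    HasDerivAt (fun σ => q1p a c1 c2 m b1 b2 t σ σ2 θ1 θ2)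
      ((1 / Dr m b1 b2 t σ1 σ2 θ1 θ2) * (1 - t) * q1p a c1 c2 m b1 b2 t σ1 σ2 θ1 θ2 *
        Ttwo b2 σ2 θ2 / (2 * (1 - b1) * (1 - σ1) ^ 2 * θ1)) σ1 ∧
    (1 / Dr m b1 b2 t σ1 σ2 θ1 θ2) * (1 - t) * q1p a c1 c2 m b1 b2 t σ1 σ2 θ1 θ2 *
        Ttwo b2 σ2 θ2 / (2 * (1 - b1) * (1 - σ1) ^ 2 * θ1) > 0 ∧
    HasDerivAt (fun σ => r1p a c1 c2 m b1 b2 t σ σ2 θ1 θ2)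
      (((1 - t) * q1p a c1 c2 m b1 b2 t σ1 σ2 θ1 θ2 / ((1 - σ1) ^ 2 * θ1)) *
        (1 + (1 / Dr m b1 b2 t σ1 σ2 θ1 θ2) * (1 - t) * Ttwo b2 σ2 θ2 /
          (2 * (1 - b1) * (1 - σ1) * θ1))) σ1 ∧
    ((1 - t) * q1p a c1 c2 m b1 b2 t σ1 σ2 θ1 θ2 / ((1 - σ1) ^ 2 * θ1)) *
        (1 + (1 / Dr m b1 b2 t σ1 σ2 θ1 θ2) * (1 - t) * Ttwo b2 σ2 θ2 /
          (2 * (1 - b1) * (1 - σ1) * θ1)) > 0 ∧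
    HasDerivAt (fun σ => q2p a c1 c2 m b1 b2 t σ1 σ θ1 θ2)
      ((1 / Dr m b1 b2 t σ1 σ2 θ1 θ2) * q2p a c1 c2 m b1 b2 t σ1 σ2 θ1 θ2 *
        Tone b1 t σ1 θ1 / (2 * (1 - b2) * (1 - σ2) ^ 2 * θ2)) σ2 ∧
    (1 / Dr m b1 b2 t σ1 σ2 θ1 θ2) * q2p a c1 c2 m b1 b2 t σ1 σ2 θ1 θ2 *
        Tone b1 t σ1 θ1 / (2 * (1 - b2) * (1 - σ2) ^ 2 * θ2) > 0 ∧
    HasDerivAt (fun σ => r2p a c1 c2 m b1 b2 t σ1 σ θ1 θ2)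
      ((q2p a c1 c2 m b1 b2 t σ1 σ2 θ1 θ2 / ((1 - σ2) ^ 2 * θ2)) *
        (Tone b1 t σ1 θ1 - Mnet m b1 b2) / Dr m b1 b2 t σ1 σ2 θ1 θ2) σ2 ∧
    (q2p a c1 c2 m b1 b2 t σ1 σ2 θ1 θ2 / ((1 - σ2) ^ 2 * θ2)) *
        (Tone b1 t σ1 θ1 - Mnet m b1 b2) / Dr m b1 b2 t σ1 σ2 θ1 θ2 > 0 ∧
    Tone b1 t σ1 θ1 - Mnet m b1 b2 > 0 := by

  obtain ⟨hb1l, hb1r⟩ := hb1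
  obtain ⟨hb2l, hb2r⟩ := hb2
  obtain ⟨htl, htr⟩ := ht
  obtain ⟨hσ1l, hσ1r⟩ := hσ1
  obtain ⟨hσ2l, hσ2r⟩ := hσ2
  have h1b1 : (0:ℝ) < 1 - b1 := by linarith
  have h1b2 : (0:ℝ) < 1 - b2 := by linarith
  have h1t : (0:ℝ) < 1 - t := by linarith
  have h1σ1 : (0:ℝ) < 1 - σ1 := by linarith
  have h1σ2 : (0:ℝ) < 1 - σ2 := by linarith
  have hΔne : Dr m b1 b2 t σ1 σ2 θ1 θ2 ≠ 0 := ne_of_gt hΔ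
  have hden1 : (2*(1-b1)*(1-σ1)*θ1) ≠ 0 := by positivity
  have hden2 : (2*(1-b2)*(1-σ2)*θ2) ≠ 0 := by positivity
  -- derivative of Tone in σ
  have hg1 : HasDerivAt (fun σ : ℝ => 2*(1-b1)*(1-σ)*θ1) ((2*(1-b1)*(0-1))*θ1) σ1 :=
    (((hasDerivAt_const σ1 (1:ℝ)).sub (hasDerivAt_id σ1)).const_mul (2*(1-b1))).mul_const θ1
  have hTone : HasDerivAt (fun σ => Tone b1 t σ θ1)
      (-((1-t)/(2*(1-b1)*(1-σ1)^2*θ1))) σ1 := by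
    have h := (hasDerivAt_const σ1 (1:ℝ)).sub
      (((hasDerivAt_const σ1 (1-t)).div hg1 hden1))
    refine h.congr_deriv ?_
    field_simp
    ring
  have hDr1 : HasDerivAt (fun σ => Dr m b1 b2 t σ σ2 θ1 θ2)
      (-((1-t)*Ttwo b2 σ2 θ2/(2*(1-b1)*(1-σ1)^2*θ1))) σ1 := by
    have h := (hTone.mul_const (Ttwo b2 σ2 θ2)).sub_const (Mnet m b1 b2)
    refine h.congr_deriv ?_
    ring
  -- derivative of q1p in σ1
  set N1 : ℝ := (a - c1 / (1 - t)) * Ttwo b2 σ2 θ2 / (2 * (1 - b1))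
      - m * (a - c2) / (2 * (1 - b2)) with hN1
  have hq1d : HasDerivAt (fun σ => q1p a c1 c2 m b1 b2 t σ σ2 θ1 θ2)
      ((1 / Dr m b1 b2 t σ1 σ2 θ1 θ2) * (1 - t) * q1p a c1 c2 m b1 b2 t σ1 σ2 θ1 θ2 *
        Ttwo b2 σ2 θ2 / (2 * (1 - b1) * (1 - σ1) ^ 2 * θ1)) σ1 := by
    have h := (hasDerivAt_const σ1 N1).div hDr1 hΔne
    refine h.congr_deriv ?_
    simp only [q1p, hN1]
    field_simp
    ring
  have hq1pos : (1 / Dr m b1 b2 t σ1 σ2 θ1 θ2) * (1 - t) * q1p a c1 c2 m b1 b2 t σ1 σ2 θ1 θ2 *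
      Ttwo b2 σ2 θ2 / (2 * (1 - b1) * (1 - σ1) ^ 2 * θ1) > 0 :=
    div_pos (mul_pos (mul_pos (mul_pos (one_div_pos.mpr hΔ) h1t) hq1) hT2) (by positivity)
  -- derivative of r1p in σ1
  have hd1 : HasDerivAt (fun σ : ℝ => (1-σ)*θ1) ((0-1)*θ1) σ1 :=
    ((hasDerivAt_const σ1 (1:ℝ)).sub (hasDerivAt_id σ1)).mul_const θ1
  have hr1d : HasDerivAt (fun σ => r1p a c1 c2 m b1 b2 t σ σ2 θ1 θ2)
      (((1 - t) * q1p a c1 c2 m b1 b2 t σ1 σ2 θ1 θ2 / ((1 - σ1) ^ 2 * θ1)) *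
        (1 + (1 / Dr m b1 b2 t σ1 σ2 θ1 θ2) * (1 - t) * Ttwo b2 σ2 θ2 /
          (2 * (1 - b1) * (1 - σ1) * θ1))) σ1 := by
    have h := (hq1d.const_mul (1-t)).div hd1 (by positivity : (1-σ1)*θ1 ≠ 0)
    refine h.congr_deriv ?_
    field_simp
    ring
  have hfac1 : (0:ℝ) < (1 - t) * q1p a c1 c2 m b1 b2 t σ1 σ2 θ1 θ2 / ((1 - σ1) ^ 2 * θ1) :=
    div_pos (mul_pos h1t hq1) (by positivity)
  have hfac2 : (0:ℝ) < 1 + (1 / Dr m b1 b2 t σ1 σ2 θ1 θ2) * (1 - t) * Ttwo b2 σ2 θ2 /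
      (2 * (1 - b1) * (1 - σ1) * θ1) := by
    have : (0:ℝ) < (1 / Dr m b1 b2 t σ1 σ2 θ1 θ2) * (1 - t) * Ttwo b2 σ2 θ2 /
        (2 * (1 - b1) * (1 - σ1) * θ1) :=
      div_pos (mul_pos (mul_pos (one_div_pos.mpr hΔ) h1t) hT2) (by positivity)
    linarith
  -- derivative of Ttwo in σ
  have hg2 : HasDerivAt (fun σ : ℝ => 2*(1-b2)*(1-σ)*θ2) ((2*(1-b2)*(0-1))*θ2) σ2 :=
    (((hasDerivAt_const σ2 (1:ℝ)).sub (hasDerivAt_id σ2)).const_mul (2*(1-b2))).mul_const θ2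
  have hTtwo : HasDerivAt (fun σ => Ttwo b2 σ θ2)
      (-(1/(2*(1-b2)*(1-σ2)^2*θ2))) σ2 := by
    have h := (hasDerivAt_const σ2 (1:ℝ)).sub
      (((hasDerivAt_const σ2 (1:ℝ)).div hg2 hden2))
    refine h.congr_deriv ?_
    field_simp
    ring
  have hDr2 : HasDerivAt (fun σ => Dr m b1 b2 t σ1 σ θ1 θ2)
      (-(Tone b1 t σ1 θ1/(2*(1-b2)*(1-σ2)^2*θ2))) σ2 := by
    have h := (hTtwo.const_mul (Tone b1 t σ1 θ1)).sub_const (Mnet m b1 b2)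
    refine h.congr_deriv ?_
    ring
  set N2 : ℝ := (a - c2) * Tone b1 t σ1 θ1 / (2 * (1 - b2))
      - m * (a - c1 / (1 - t)) / (2 * (1 - b1)) with hN2
  have hq2d : HasDerivAt (fun σ => q2p a c1 c2 m b1 b2 t σ1 σ θ1 θ2)
      ((1 / Dr m b1 b2 t σ1 σ2 θ1 θ2) * q2p a c1 c2 m b1 b2 t σ1 σ2 θ1 θ2 *
        Tone b1 t σ1 θ1 / (2 * (1 - b2) * (1 - σ2) ^ 2 * θ2)) σ2 := by
    have h := (hasDerivAt_const σ2 N2).div hDr2 hΔne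
    refine h.congr_deriv ?_
    simp only [q2p, hN2]
    field_simp
    try ring
    try exact Or.inl trivial
  have hq2pos : (1 / Dr m b1 b2 t σ1 σ2 θ1 θ2) * q2p a c1 c2 m b1 b2 t σ1 σ2 θ1 θ2 *
      Tone b1 t σ1 θ1 / (2 * (1 - b2) * (1 - σ2) ^ 2 * θ2) > 0 :=
    div_pos (mul_pos (mul_pos (one_div_pos.mpr hΔ) hq2) hT1) (by positivity)
  -- T1 - M > 0
  have h1mT2 : (0:ℝ) < 1 - Ttwo b2 σ2 θ2 := by
    have : 1 - Ttwo b2 σ2 θ2 = 1/(2*(1-b2)*(1-σ2)*θ2) := by simp [Ttwo]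
    rw [this]; positivity
  have hTM : Tone b1 t σ1 θ1 - Mnet m b1 b2 > 0 := by
    have hΔ' : Tone b1 t σ1 θ1 * Ttwo b2 σ2 θ2 - Mnet m b1 b2 > 0 := hΔ
    nlinarith [mul_pos hT1 h1mT2]
  -- derivative of r2p in σ2
  have hd2 : HasDerivAt (fun σ : ℝ => (1-σ)*θ2) ((0-1)*θ2) σ2 :=
    ((hasDerivAt_const σ2 (1:ℝ)).sub (hasDerivAt_id σ2)).mul_const θ2
  have hr2d : HasDerivAt (fun σ => r2p a c1 c2 m b1 b2 t σ1 σ θ1 θ2)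
      ((q2p a c1 c2 m b1 b2 t σ1 σ2 θ1 θ2 / ((1 - σ2) ^ 2 * θ2)) *
        (Tone b1 t σ1 θ1 - Mnet m b1 b2) / Dr m b1 b2 t σ1 σ2 θ1 θ2) σ2 := by
    have key : Tone b1 t σ1 θ1 - Mnet m b1 b2
        = Dr m b1 b2 t σ1 σ2 θ1 θ2 + Tone b1 t σ1 θ1 / (2*(1-b2)*(1-σ2)*θ2) := by
      simp only [Dr, Ttwo]
      field_simp
      ring
    have h := hq2d.div hd2 (by positivity : (1-σ2)*θ2 ≠ 0)
    refine h.congr_deriv ?_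
    rw [key]
    field_simp
    ring
  have hr2pos : (q2p a c1 c2 m b1 b2 t σ1 σ2 θ1 θ2 / ((1 - σ2) ^ 2 * θ2)) *
      (Tone b1 t σ1 θ1 - Mnet m b1 b2) / Dr m b1 b2 t σ1 σ2 θ1 θ2 > 0 :=
    div_pos (mul_pos (div_pos hq2 (by positivity)) hTM) hΔ
  exact ⟨hq1d, hq1pos, hr1d, mul_pos hfac1 hfac2, hq2d, hq2pos, hr2d, hr2pos, hTM⟩
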